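/- arXiv:2202.04579 — 9 statements merged into one kernel-verified Lean document; each statement's English description precedes it below -/
import Mathlib

section
/- Let F be a discrete O(d)-bundle on a connected graph G, and define r as the maximum over all pairs of nodes (v,u) and pairs of paths γ, γ' from v to u of the operator norm of P^γ_{v→u} − P^{γ'}_{v→u}, where P^γ denotes the transport map along the path γ. Then the smallest eigenvalue λ_0 of the normalised sheaf Laplacian Δ_F satisfies λ_0 ≤ r²/2. -/
open Matrix BigOperators

/-- The transport map along a path `(v₀, v₁, …, v_L)`, composing `F_{v_{i+1}⊴e}ᵀ F_{v_i⊴e}`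
along consecutive edges.  `F v u` denotes `F_{v ⊴ e}` for the edge `e = (v,u)`. -/
def transport {V : Type*} {d : ℕ} (F : V → V → Matrix (Fin d) (Fin d) ℝ) :
    List V → Matrix (Fin d) (Fin d) ℝ
  | [] => 1
  | [_] => 1
  | v :: u :: rest => transport F (u :: rest) * ((F u v)ᵀ * F v u)

/-- `p` is a walk in `G` from `v` to `u`. -/
def IsPathFrom {V : Type*} (G : SimpleGraph V) (p : List V) (v u : V) : Prop :=
  p.head? = some v ∧ p.getLast? = some u ∧ p.Chain' G.Adj

/-- The normalised sheaf Laplacian `Δ_F = D^{-1/2} L_F D^{-1/2}`, written as a matrix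
indexed by `V × Fin d`, for a sheaf with `d`-dimensional stalks. -/
noncomputable def normSheafLaplacian {V : Type*} [Fintype V] [DecidableEq V] (G : SimpleGraph V)
    [DecidableRel G.Adj] {d : ℕ} (F : V → V → Matrix (Fin d) (Fin d) ℝ) :
    Matrix (V × Fin d) (V × Fin d) ℝ :=
  fun p q =>
    (if p.1 = q.1 then (∑ w ∈ G.neighborFinset p.1, (F p.1 w)ᵀ * F p.1 w) p.2 q.2
     else if G.Adj p.1 q.1 then -(((F p.1 q.1)ᵀ * F q.1 p.1) p.2 q.2) else 0)
    / (Real.sqrt (G.degree p.1) * Real.sqrt (G.degree q.1))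

/-!
Fix a base vertex `v₀`, a path `γ_v` from `v₀` to each `v`, and a vector `y ≠ 0`, and test the
Rayleigh quotient on `x = D^{1/2} z` with `z_v = P^{γ_v} y`. Symmetrising over the two ends of each
edge gives `2 ⟨x, Δ_F x⟩ = ∑_v ∑_{u ~ v} ‖F_{v⊴e} z_v - F_{u⊴e} z_u‖²`. Since `F_{v⊴e}` is
orthogonal, each summand is `‖(P^{γ_v} - P^{γ_u v}) y‖² ≤ r² ‖y‖²`, the two transports being
along two paths from `v₀` to `v`; and `‖x‖² = ∑_v deg v ‖y‖²`. If the graph has no edges,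
`Δ_F = 0`.
-/

namespace Matrix

variable {m n R : Type*} [Fintype m] [Fintype n]

lemma dotProduct_transpose_mul_mulVec [CommSemiring R] (A B : Matrix m n R) (x y : n → R) :
    x ⬝ᵥ (Aᵀ * B) *ᵥ y = (A *ᵥ x) ⬝ᵥ (B *ᵥ y) := by
  rw [← mulVec_mulVec, dotProduct_mulVec, vecMul_transpose]

lemma dotProduct_mulVec_uncurry [NonUnitalNonAssocSemiring R] (M : Matrix (m × n) (m × n) R)
    (x : m → n → R) :
    Function.uncurry x ⬝ᵥ M *ᵥ Function.uncurry x =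
      ∑ v, ∑ u, x v ⬝ᵥ (fun i j => M (v, i) (u, j)) *ᵥ x u := by
  simp only [dotProduct, mulVec, Fintype.sum_prod_type, Function.uncurry_apply_pair,
    Finset.mul_sum]
  exact Finset.sum_congr rfl fun _ _ => Finset.sum_comm

variable [DecidableEq n] [CommRing R] {A : Matrix n n R}

lemma transpose_mem_orthogonalGroup (hA : A ∈ orthogonalGroup n R) :
    Aᵀ ∈ orthogonalGroup n R := by
  rw [mem_orthogonalGroup_iff', transpose_transpose]
  exact (mem_orthogonalGroup_iff n R).mp hA

lemma mulVec_dotProduct_mulVec_of_mem_orthogonalGroup (hA : A ∈ orthogonalGroup n R)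
    (x y : n → R) : (A *ᵥ x) ⬝ᵥ (A *ᵥ y) = x ⬝ᵥ y := by
  rw [← dotProduct_transpose_mul_mulVec, (mem_orthogonalGroup_iff' n R).mp hA, one_mulVec]

lemma mulVec_sub_dotProduct_self_of_mem_orthogonalGroup (hA : A ∈ orthogonalGroup n R)
    (x y : n → R) :
    (A *ᵥ x - y) ⬝ᵥ (A *ᵥ x - y) = (x - Aᵀ *ᵥ y) ⬝ᵥ (x - Aᵀ *ᵥ y) := by
  have : A *ᵥ x - y = A *ᵥ (x - Aᵀ *ᵥ y) := by
    rw [mulVec_sub, mulVec_mulVec, (mem_orthogonalGroup_iff n R).mp hA, one_mulVec]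
  rw [this, mulVec_dotProduct_mulVec_of_mem_orthogonalGroup hA]

end Matrix

section Transport

variable {V : Type*} {d : ℕ} {G : SimpleGraph V} {F : V → V → Matrix (Fin d) (Fin d) ℝ}

lemma transport_mem_orthogonalGroup
    (horth : ∀ v u : V, G.Adj v u → F v u ∈ orthogonalGroup (Fin d) ℝ) :
    ∀ {l : List V}, l.IsChain G.Adj → transport F l ∈ orthogonalGroup (Fin d) ℝ
  | [], _ | [_], _ => one_mem _
  | a :: b :: _, hl => by
    obtain ⟨hab, hl⟩ := List.isChain_cons_cons.mp hl
    exact mul_mem (transport_mem_orthogonalGroup horth hl)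
      (mul_mem (transpose_mem_orthogonalGroup (horth b a hab.symm)) (horth a b hab))

lemma transport_concat (F : V → V → Matrix (Fin d) (Fin d) ℝ) (v : V) :
    ∀ {l : List V} {u : V}, l.getLast? = some u →
      transport F (l ++ [v]) = ((F v u)ᵀ * F u v) * transport F l
  | [], _, h => nomatch h
  | [_], _, h => by
    cases Option.some.inj h
    simp [transport]
  | a :: b :: l, u, h => by
    rw [List.getLast?_cons_cons] at h
    change transport F (b :: l ++ [v]) * _ = _ * (transport F (b :: l) * _)
    rw [transport_concat F v h, Matrix.mul_assoc]

lemma IsPathFrom.concat {l : List V} {w u v : V} (hl : IsPathFrom G l w u) (huv : G.Adj u v) :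
    IsPathFrom G (l ++ [v]) w v := by
  obtain ⟨hhead, hlast, hchain⟩ := hl
  refine ⟨?_, List.getLast?_concat, hchain.append (List.isChain_singleton v) ?_⟩
  · rw [List.head?_append, hhead]
    rfl
  · simp [hlast, huv]

lemma SimpleGraph.Reachable.exists_isPathFrom {w u : V} (h : G.Reachable w u) :
    ∃ l, IsPathFrom G l w u := by
  obtain ⟨p⟩ := h
  refine ⟨p.support, ?_, ?_, p.isChain_adj_support⟩
  · rw [List.head?_eq_some_head p.support_ne_nil, p.head_support]
  · rw [List.getLast?_eq_some_getLast p.support_ne_nil, p.getLast_support]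

end Transport

section EdgeEnergy

variable {V : Type*} {d : ℕ} (F : V → V → Matrix (Fin d) (Fin d) ℝ)

def sheafEdgeEnergy (z : V → Fin d → ℝ) (v u : V) : ℝ :=
  (F v u *ᵥ z v - F u v *ᵥ z u) ⬝ᵥ (F v u *ᵥ z v - F u v *ᵥ z u)

lemma sheafEdgeEnergy_eq_of_transport {z : V → Fin d → ℝ} {v u : V}
    (hvu : F v u ∈ orthogonalGroup (Fin d) ℝ) {γ γ' : List V} (hγ : γ.getLast? = some u)
    {y : Fin d → ℝ} (hzv : z v = transport F γ' *ᵥ y) (hzu : z u = transport F γ *ᵥ y) :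
    sheafEdgeEnergy F z v u =
      ((transport F γ' - transport F (γ ++ [v])) *ᵥ y) ⬝ᵥ
        ((transport F γ' - transport F (γ ++ [v])) *ᵥ y) := by
  rw [sheafEdgeEnergy, mulVec_sub_dotProduct_self_of_mem_orthogonalGroup hvu, hzv, hzu,
    mulVec_mulVec, mulVec_mulVec, ← transport_concat F v hγ, sub_mulVec]

end EdgeEnergy

section SqrtDegreeScale

variable {V : Type*} [Fintype V] (G : SimpleGraph V) [DecidableRel G.Adj] {d : ℕ}

/-- The vector `D^{1/2} z`, with `D` the degree matrix. -/
noncomputable def sqrtDegreeScale (z : V → Fin d → ℝ) (v : V) : Fin d → ℝ :=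
  √(G.degree v) • z v

variable {G}

lemma dotProduct_sqrtDegreeScale (z : V → Fin d → ℝ) :
    Function.uncurry (sqrtDegreeScale G z) ⬝ᵥ Function.uncurry (sqrtDegreeScale G z) =
      ∑ v, G.degree v * (z v ⬝ᵥ z v) := by
  simp only [dotProduct, Fintype.sum_prod_type, Function.uncurry_apply_pair, sqrtDegreeScale,
    Pi.smul_apply, smul_eq_mul, Finset.mul_sum]
  refine Finset.sum_congr rfl fun v _ => Finset.sum_congr rfl fun i _ => ?_
  rw [mul_mul_mul_comm, Real.mul_self_sqrt (Nat.cast_nonneg _)]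

lemma uncurry_sqrtDegreeScale_ne_zero {z : V → Fin d → ℝ} {v : V} (hv : G.degree v ≠ 0)
    (hz : z v ≠ 0) : Function.uncurry (sqrtDegreeScale G z) ≠ 0 := by
  obtain ⟨i, hi⟩ := Function.ne_iff.mp hz
  exact Function.ne_iff.mpr ⟨(v, i), by simpa [sqrtDegreeScale, hv] using hi⟩

end SqrtDegreeScale

section SheafLaplacian

variable {V : Type*} [Fintype V] [DecidableEq V] (G : SimpleGraph V) [DecidableRel G.Adj] {d : ℕ}
  (F : V → V → Matrix (Fin d) (Fin d) ℝ)

/-- The `(v, u)` block of the unnormalised sheaf Laplacian `L_F`. -/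
def sheafLaplacianBlock (v u : V) : Matrix (Fin d) (Fin d) ℝ :=
  if v = u then ∑ w ∈ G.neighborFinset v, (F v w)ᵀ * F v w
  else if G.Adj v u then -((F v u)ᵀ * F u v) else 0

variable {G}

lemma sheafLaplacianBlock_eq_zero {v u : V} (h : G.degree v = 0 ∨ G.degree u = 0) :
    sheafLaplacianBlock G F v u = 0 := by
  have hv : G.neighborFinset v = ∅ ∨ G.neighborFinset u = ∅ := by
    simpa only [← Finset.card_eq_zero, G.card_neighborFinset_eq_degree] using h
  unfold sheafLaplacianBlock
  split_ifs with hvu hadj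
  · subst hvu
    rw [or_self] at hv
    rw [hv, Finset.sum_empty]
  · rcases hv with hv | hv
    · simpa [hv] using (G.mem_neighborFinset v u).mpr hadj
    · simpa [hv] using (G.mem_neighborFinset u v).mpr hadj.symm
  · rfl

lemma normSheafLaplacian_apply (p q : V × Fin d) :
    normSheafLaplacian G F p q =
      sheafLaplacianBlock G F p.1 q.1 p.2 q.2 / (√(G.degree p.1) * √(G.degree q.1)) := by
  unfold normSheafLaplacian sheafLaplacianBlock
  split_ifs <;> rfl

lemma dotProduct_sheafLaplacianBlock_mulVec (z : V → Fin d → ℝ) (v : V) :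
    ∑ u, z v ⬝ᵥ sheafLaplacianBlock G F v u *ᵥ z u =
      ∑ u ∈ G.neighborFinset v, (F v u *ᵥ z v) ⬝ᵥ (F v u *ᵥ z v - F u v *ᵥ z u) := by
  have hterm : ∀ u, z v ⬝ᵥ sheafLaplacianBlock G F v u *ᵥ z u =
      (if v = u then ∑ w ∈ G.neighborFinset v, (F v w *ᵥ z v) ⬝ᵥ (F v w *ᵥ z v) else 0) +
        if G.Adj v u then -((F v u *ᵥ z v) ⬝ᵥ (F u v *ᵥ z u)) else 0 := by
    intro u
    unfold sheafLaplacianBlock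
    split_ifs with hvu hadj hadj
    · exact absurd hadj (hvu ▸ G.irrefl)
    · subst hvu
      simp only [sum_mulVec, dotProduct_sum, dotProduct_transpose_mul_mulVec, add_zero]
    · rw [neg_mulVec, dotProduct_neg, dotProduct_transpose_mul_mulVec, zero_add]
    · rw [zero_mulVec, dotProduct_zero, add_zero]
  rw [Finset.sum_congr rfl fun u _ => hterm u, Finset.sum_add_distrib, Finset.sum_ite_eq,
    if_pos (Finset.mem_univ v), ← Finset.sum_filter, ← G.neighborFinset_eq_filter,
    ← Finset.sum_add_distrib]
  exact Finset.sum_congr rfl fun u _ => by rw [dotProduct_sub, sub_eq_add_neg]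

lemma normSheafLaplacian_eq_zero (h : ∀ v, G.degree v = 0) : normSheafLaplacian G F = 0 := by
  ext p q
  rw [normSheafLaplacian_apply, sheafLaplacianBlock_eq_zero F (.inl (h p.1))]
  simp

lemma two_mul_sum_dotProduct_sheafLaplacianBlock_mulVec (z : V → Fin d → ℝ) :
    2 * ∑ v, ∑ u, z v ⬝ᵥ sheafLaplacianBlock G F v u *ᵥ z u =
      ∑ v, ∑ u ∈ G.neighborFinset v, sheafEdgeEnergy F z v u := by
  simp only [dotProduct_sheafLaplacianBlock_mulVec]
  have hswap : ∑ v, ∑ u ∈ G.neighborFinset v, (F v u *ᵥ z v) ⬝ᵥ (F v u *ᵥ z v - F u v *ᵥ z u) =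
      ∑ v, ∑ u ∈ G.neighborFinset v, (F u v *ᵥ z u) ⬝ᵥ (F u v *ᵥ z u - F v u *ᵥ z v) :=
    Finset.sum_comm' fun v u => by simp [G.adj_comm]
  rw [two_mul]
  nth_rewrite 2 [hswap]
  rw [← Finset.sum_add_distrib]
  refine Finset.sum_congr rfl fun v _ => ?_
  rw [← Finset.sum_add_distrib]
  refine Finset.sum_congr rfl fun u _ => ?_
  simp only [sheafEdgeEnergy, sub_dotProduct, dotProduct_sub, dotProduct_comm (F u v *ᵥ z u)]
  ring

lemma dotProduct_normSheafLaplacian_mulVec_sqrtDegreeScale (z : V → Fin d → ℝ) :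
    Function.uncurry (sqrtDegreeScale G z) ⬝ᵥ
        normSheafLaplacian G F *ᵥ Function.uncurry (sqrtDegreeScale G z) =
      ∑ v, ∑ u, z v ⬝ᵥ sheafLaplacianBlock G F v u *ᵥ z u := by
  rw [dotProduct_mulVec_uncurry]
  refine Finset.sum_congr rfl fun v _ => Finset.sum_congr rfl fun u _ => ?_
  have hblock : (fun i j => normSheafLaplacian G F (v, i) (u, j)) =
      (√(G.degree v) * √(G.degree u))⁻¹ • sheafLaplacianBlock G F v u := by
    ext i j
    rw [normSheafLaplacian_apply, Matrix.smul_apply, smul_eq_mul, div_eq_inv_mul]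
  rw [hblock, sqrtDegreeScale, sqrtDegreeScale, smul_mulVec, mulVec_smul, smul_dotProduct,
    dotProduct_smul, dotProduct_smul, smul_eq_mul, smul_eq_mul, smul_eq_mul]
  rcases eq_or_ne (√(G.degree v) * √(G.degree u)) 0 with h | h
  · rw [sheafLaplacianBlock_eq_zero F (by simpa using h), zero_mulVec, dotProduct_zero]
    ring
  · rw [← mul_assoc, ← mul_assoc, mul_right_comm _ _ √(G.degree u), mul_inv_cancel₀ h, one_mul]

lemma two_mul_dotProduct_normSheafLaplacian_mulVec_le {c : ℝ} {z : V → Fin d → ℝ}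
    (hz : ∀ v u, G.Adj v u → sheafEdgeEnergy F z v u ≤ c * (z v ⬝ᵥ z v)) :
    2 * (Function.uncurry (sqrtDegreeScale G z) ⬝ᵥ
        normSheafLaplacian G F *ᵥ Function.uncurry (sqrtDegreeScale G z)) ≤
      c * (Function.uncurry (sqrtDegreeScale G z) ⬝ᵥ Function.uncurry (sqrtDegreeScale G z)) := by
  rw [dotProduct_normSheafLaplacian_mulVec_sqrtDegreeScale,
    two_mul_sum_dotProduct_sheafLaplacianBlock_mulVec, dotProduct_sqrtDegreeScale, Finset.mul_sum]
  refine Finset.sum_le_sum fun v _ => ?_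
  calc ∑ u ∈ G.neighborFinset v, sheafEdgeEnergy F z v u
      ≤ ∑ u ∈ G.neighborFinset v, c * (z v ⬝ᵥ z v) :=
        Finset.sum_le_sum fun u hu => hz v u ((G.mem_neighborFinset v u).mp hu)
    _ = c * (G.degree v * (z v ⬝ᵥ z v)) := by
        rw [Finset.sum_const, G.card_neighborFinset_eq_degree, nsmul_eq_mul]
        ring

end SheafLaplacian

theorem spectral_gap_le_transport_deviation_general {V : Type*} [Fintype V] [DecidableEq V] (G : SimpleGraph V)
    [DecidableRel G.Adj] (hconn : G.Connected) {d : ℕ} (hd : 0 < d)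
    (F : V → V → Matrix (Fin d) (Fin d) ℝ)
    (horth : ∀ v u : V, G.Adj v u → F v u ∈ Matrix.orthogonalGroup (Fin d) ℝ)
    (r : ℝ)
    (hr : ∀ (v u : V) (γ γ' : List V), IsPathFrom G γ v u → IsPathFrom G γ' v u →
      ∀ y : Fin d → ℝ,
        ((transport F γ - transport F γ').mulVec y) ⬝ᵥ
          ((transport F γ - transport F γ').mulVec y) ≤ r ^ 2 * (y ⬝ᵥ y)) :
    ∃ x : V × Fin d → ℝ, x ≠ 0 ∧
      x ⬝ᵥ (normSheafLaplacian G F).mulVec x ≤ r ^ 2 / 2 * (x ⬝ᵥ x) := by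
  have : NeZero d := ⟨hd.ne'⟩
  have hV := hconn.nonempty
  by_cases hdeg : ∀ v, G.degree v = 0
  · obtain ⟨x, hx⟩ := exists_ne (0 : V × Fin d → ℝ)
    refine ⟨x, hx, ?_⟩
    rw [normSheafLaplacian_eq_zero F hdeg, zero_mulVec, dotProduct_zero]
    exact mul_nonneg (by positivity) (Finset.sum_nonneg fun p _ => mul_self_nonneg (x p))
  obtain ⟨v₁, hv₁⟩ := not_forall.mp hdeg
  obtain ⟨v₀⟩ := hV
  choose γ hγ using fun v => (hconn.preconnected v₀ v).exists_isPathFrom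
  obtain ⟨y, hy⟩ := exists_ne (0 : Fin d → ℝ)
  set z : V → Fin d → ℝ := fun v => transport F (γ v) *ᵥ y
  have hzz : ∀ v, z v ⬝ᵥ z v = y ⬝ᵥ y := fun v =>
    mulVec_dotProduct_mulVec_of_mem_orthogonalGroup
      (transport_mem_orthogonalGroup horth (hγ v).2.2) y y
  have hedge : ∀ v u, G.Adj v u → sheafEdgeEnergy F z v u ≤ r ^ 2 * (z v ⬝ᵥ z v) := by
    intro v u hadj
    rw [sheafEdgeEnergy_eq_of_transport F (horth v u hadj) (hγ u).2.1 rfl rfl, hzz]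
    exact hr v₀ v _ _ (hγ v) ((hγ u).concat hadj.symm) y
  have hz₁ : z v₁ ≠ 0 := fun h =>
    hy (dotProduct_self_eq_zero.mp ((hzz v₁).symm.trans (by rw [h, zero_dotProduct])))
  refine ⟨_, uncurry_sqrtDegreeScale_ne_zero hv₁ hz₁, ?_⟩
  linarith [two_mul_dotProduct_normSheafLaplacian_mulVec_le F hedge]

/-- For a discrete `O(d)`-bundle on a connected graph, if `r` bounds the
(operator-norm) deviation `‖P^γ_{v→u} − P^{γ'}_{v→u}‖` over all pairs of nodes and all
pairs of paths between them, then the smallest eigenvalue of the normalised sheaf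
Laplacian — the minimum of the Rayleigh quotient `⟨x, Δ_F x⟩ / ‖x‖²` over `x ≠ 0` —
is at most `r² / 2`.  (The conclusion is stated as the existence of a nonzero vector
whose Rayleigh quotient is at most `r²/2`.) -/
theorem spectral_gap_le_transport_deviation {V : Type*} [Fintype V] [DecidableEq V] (G : SimpleGraph V)
    [DecidableRel G.Adj] (hconn : G.Connected) {d : ℕ} (hd : 0 < d)
    (F : V → V → Matrix (Fin d) (Fin d) ℝ)
    (horth : ∀ v u : V, G.Adj v u → F v u ∈ Matrix.orthogonalGroup (Fin d) ℝ)
    (r : ℝ) (hr0 : 0 ≤ r)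
    (hr : ∀ (v u : V) (γ γ' : List V), IsPathFrom G γ v u → IsPathFrom G γ' v u →
      ∀ y : Fin d → ℝ,
        ((transport F γ - transport F γ').mulVec y) ⬝ᵥ
          ((transport F γ - transport F γ').mulVec y) ≤ r ^ 2 * (y ⬝ᵥ y)) :
    ∃ x : V × Fin d → ℝ, x ≠ 0 ∧
      x ⬝ᵥ (normSheafLaplacian G F).mulVec x ≤ r ^ 2 / 2 * (x ⬝ᵥ x) :=
  spectral_gap_le_transport_deviation_general G hconn hd F horth r hr
end

section
/- For a graph G, the set of normalised sheaf Laplacians arising from sheaves in H¹_sym (one-dimensional stalks, symmetric non-zero restriction maps F_{v⊴e} = F_{u⊴e} ≠ 0) coincides with the set of normalised weighted graph Laplacians over G with strictly positive edge weights. -/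
/-! A sheaf in `H¹_sym` gives the weights `w_{vu} = F_{v⊴e} F_{u⊴e} = F_{v⊴e}² > 0`, and
conversely positive symmetric weights come from the sheaf `F_{v⊴e} = √w_{vu}`. For symmetric
restriction maps the sheaf degree `Σ_{v⊴e} F_{v⊴e}²` is the weighted degree of these weights,
so the two normalised Laplacians agree entrywise. -/

open Matrix BigOperators

/-- The normalised sheaf Laplacian `Δ_F = D^{-1/2} L_F D^{-1/2}` of a sheaf with
one-dimensional stalks on a graph `G`, where `F v u` is the scalar restriction map
`F_{v ⊴ e}` for the edge `e = (v,u)`.  Off-diagonal entries are `-F_{v⊴e} F_{u⊴e}`,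
diagonal entries are `Σ_{v⊴e} F_{v⊴e}²`, normalised by the square roots of the
diagonal (weighted degrees). -/
noncomputable def normSheafLaplacian1 {V : Type*} [Fintype V] [DecidableEq V]
    (G : SimpleGraph V) [DecidableRel G.Adj] (F : V → V → ℝ) : Matrix V V ℝ :=
  fun v u =>
    (if v = u then ∑ w ∈ G.neighborFinset v, (F v w) ^ 2
     else if G.Adj v u then -(F v u * F u v) else 0)
    / (Real.sqrt (∑ w ∈ G.neighborFinset v, (F v w) ^ 2) *
       Real.sqrt (∑ w ∈ G.neighborFinset u, (F u w) ^ 2))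

/-- The normalised weighted graph Laplacian `D^{-1/2}(D − W)D^{-1/2}` of a weight
matrix `W`, where `D` is the diagonal matrix of weighted degrees. -/
noncomputable def normWeightedLaplacian {V : Type*} [Fintype V] [DecidableEq V]
    (W : Matrix V V ℝ) : Matrix V V ℝ :=
  fun v u =>
    ((if v = u then ∑ w, W v w else 0) - W v u)
    / (Real.sqrt (∑ w, W v w) * Real.sqrt (∑ w, W u w))

def sheafWeights {V : Type*} (G : SimpleGraph V) [DecidableRel G.Adj] (F : V → V → ℝ) :
    Matrix V V ℝ :=
  fun v u => if G.Adj v u then F v u * F u v else 0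

section

variable {V : Type*} (G : SimpleGraph V) [DecidableRel G.Adj]

lemma sheafWeights_transpose (F : V → V → ℝ) : (sheafWeights G F)ᵀ = sheafWeights G F := by
  ext v u
  simp only [transpose_apply, sheafWeights, G.adj_comm, mul_comm]

lemma sheafWeights_pos {F : V → V → ℝ} {v u : V} (h : G.Adj v u) (hsym : F v u = F u v)
    (hne : F v u ≠ 0) : 0 < sheafWeights G F v u := by
  rw [sheafWeights, if_pos h, ← hsym]
  exact mul_self_pos.mpr hne

lemma sheafWeights_of_not_adj (F : V → V → ℝ) {v u : V} (h : ¬ G.Adj v u) :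
    sheafWeights G F v u = 0 :=
  if_neg h

lemma sheafWeights_sqrt {W : Matrix V V ℝ} (hW : Wᵀ = W)
    (hWpos : ∀ v u, G.Adj v u → 0 ≤ W v u) (hWzero : ∀ v u, ¬ G.Adj v u → W v u = 0) :
    sheafWeights G (fun v u => √(W v u)) = W := by
  ext v u
  by_cases h : G.Adj v u
  · rw [sheafWeights, if_pos h, show W u v = W v u from congrFun (congrFun hW v) u,
      Real.mul_self_sqrt (hWpos v u h)]
  · rw [sheafWeights_of_not_adj G _ h, hWzero v u h]

variable [Fintype V]

lemma sum_neighborFinset_sq_eq_sum_sheafWeights {F : V → V → ℝ}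
    (hF : ∀ v u, G.Adj v u → F v u = F u v) (v : V) :
    ∑ w ∈ G.neighborFinset v, F v w ^ 2 = ∑ w, sheafWeights G F v w := by
  rw [G.neighborFinset_eq_filter, Finset.sum_filter]
  refine Finset.sum_congr rfl fun w _ => ?_
  by_cases h : G.Adj v w
  · rw [sheafWeights, if_pos h, if_pos h, sq, ← hF v w h]
  · rw [sheafWeights, if_neg h, if_neg h]

lemma normSheafLaplacian1_eq_normWeightedLaplacian [DecidableEq V] {F : V → V → ℝ}
    (hF : ∀ v u, G.Adj v u → F v u = F u v) :
    normSheafLaplacian1 G F = normWeightedLaplacian (sheafWeights G F) := by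
  ext v u
  simp only [normSheafLaplacian1, normWeightedLaplacian,
    sum_neighborFinset_sq_eq_sum_sheafWeights G hF]
  congr 1
  by_cases hvu : v = u
  · subst hvu
    rw [if_pos rfl, if_pos rfl, sheafWeights_of_not_adj G F G.irrefl, sub_zero]
  · rw [if_neg hvu, if_neg hvu, zero_sub, sheafWeights]
    split_ifs <;> simp

end

/-- For a graph `G`, the set of normalised sheaf Laplacians arising from
sheaves in `H¹_sym` (one-dimensional stalks, symmetric non-zero restriction maps) coincides
with the set of normalised weighted graph Laplacians over `G` with strictly positive edge
weights. -/
theorem normSheafLaplacians_H1sym_eq_weightedLaplacians {V : Type*} [Fintype V]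
    [DecidableEq V] (G : SimpleGraph V) [DecidableRel G.Adj] :
    {M : Matrix V V ℝ | ∃ F : V → V → ℝ,
        (∀ v u : V, G.Adj v u → F v u = F u v ∧ F v u ≠ 0) ∧
        M = normSheafLaplacian1 G F} =
      {M : Matrix V V ℝ | ∃ W : Matrix V V ℝ, Wᵀ = W ∧
        (∀ v u : V, (G.Adj v u → 0 < W v u) ∧ (¬ G.Adj v u → W v u = 0)) ∧
        M = normWeightedLaplacian W} := by
  ext M
  constructor
  · rintro ⟨F, hF, rfl⟩
    refine ⟨sheafWeights G F, sheafWeights_transpose G F, fun v u => ⟨fun h => ?_,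
      sheafWeights_of_not_adj G F⟩, ?_⟩
    · exact sheafWeights_pos G h (hF v u h).1 (hF v u h).2
    · exact normSheafLaplacian1_eq_normWeightedLaplacian G fun v u h => (hF v u h).1
  · rintro ⟨W, hW, hWadj, rfl⟩
    have hsqrt_symm : ∀ v u, √(W v u) = √(W u v) := fun v u =>
      congrArg Real.sqrt (congrFun (congrFun hW u) v)
    refine ⟨fun v u => √(W v u), fun v u h =>
      ⟨hsqrt_symm v u, (Real.sqrt_pos.mpr ((hWadj v u).1 h)).ne'⟩, ?_⟩
    rw [normSheafLaplacian1_eq_normWeightedLaplacian G fun v u _ => hsqrt_symm v u,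
      sheafWeights_sqrt G hW (fun v u h => ((hWadj v u).1 h).le) fun v u => (hWadj v u).2]
end

section
/- Let G = (A, B, E) be a connected bipartite graph with |A| = |B|. For any sheaf F ∈ H¹_sym over G (one-dimensional stalks with symmetric non-zero restriction maps), the unique harmonic eigenvector y of the normalised sheaf Laplacian, given by y_v = sqrt(Σ_{v⊴e} F_{v⊴e}²), cannot satisfy y_v < y_u for all v ∈ A, u ∈ B. In particular, diffusion with such a Laplacian cannot linearly separate the two partitions in the infinite-time limit for any initial conditions. -/
open Matrix BigOperators

/-! On a bipartite graph every edge has exactly one end in each part, so the weighted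
degrees `Σ_{v⊴e} F_{v⊴e}²` sum to the same total over `A` as over `B`. Two families of equal
size with equal sums cannot be strictly separated: the largest value on `A` would then be
smaller than the smallest value on `B`. Since `√` is strictly monotone, the same holds for
the entries `y v` of the harmonic eigenvector. -/

theorem SimpleGraph.sum_sum_neighborFinset_eq_of_bipartite {V M : Type*} [AddCommMonoid M]
    (G : SimpleGraph V) [∀ v, Fintype (G.neighborSet v)] {A B : Finset V}
    (hbip : ∀ v u : V, G.Adj v u → (v ∈ A ↔ u ∈ B))
    {f : V → V → M} (hf : ∀ v u : V, G.Adj v u → f v u = f u v) :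
    ∑ v ∈ A, ∑ w ∈ G.neighborFinset v, f v w = ∑ u ∈ B, ∑ w ∈ G.neighborFinset u, f u w := by
  calc ∑ v ∈ A, ∑ w ∈ G.neighborFinset v, f v w
      = ∑ u ∈ B, ∑ w ∈ G.neighborFinset u, f w u := by
        refine Finset.sum_comm' fun v u => ?_
        simp only [mem_neighborFinset]
        exact ⟨fun ⟨hv, hvu⟩ => ⟨hvu.symm, (hbip v u hvu).1 hv⟩,
          fun ⟨huv, hu⟩ => ⟨(hbip v u huv.symm).2 hu, huv.symm⟩⟩
    _ = ∑ u ∈ B, ∑ w ∈ G.neighborFinset u, f u w :=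
        Finset.sum_congr rfl fun u _ => Finset.sum_congr rfl fun w hw =>
          (hf u w ((G.mem_neighborFinset u w).1 hw)).symm

theorem Finset.exists_le_of_card_eq_of_sum_eq {ι M : Type*} [AddCommMonoid M] [LinearOrder M]
    [IsOrderedCancelAddMonoid M] {A B : Finset ι} (hA : A.Nonempty) (hcard : A.card = B.card)
    {f : ι → M} (hsum : ∑ v ∈ A, f v = ∑ u ∈ B, f u) : ∃ v ∈ A, ∃ u ∈ B, f u ≤ f v := by
  obtain ⟨v, hv, hmax⟩ := A.exists_max_image f hA
  obtain ⟨u, hu, hmin⟩ := B.exists_min_image f (card_pos.1 (hcard ▸ card_pos.2 hA))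
  refine ⟨v, hv, u, hu, le_of_not_gt fun hlt => ?_⟩
  have : ∑ v ∈ A, f v < ∑ u ∈ B, f u :=
    calc ∑ v ∈ A, f v ≤ A.card • f v := sum_le_card_nsmul A f _ hmax
      _ < A.card • f u := nsmul_lt_nsmul_right (card_pos.2 hA).ne' hlt
      _ = B.card • f u := by rw [hcard]
      _ ≤ ∑ u ∈ B, f u := card_nsmul_le_sum B f _ hmin
  exact this.ne hsum

theorem bipartite_H1sym_no_separation_general {V : Type*} [Fintype V]
    (G : SimpleGraph V) [DecidableRel G.Adj] (hconn : G.Connected)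
    (A B : Finset V)
    (hpart : ∀ v : V, v ∈ A ↔ v ∉ B)
    (hbip : ∀ v u : V, G.Adj v u → (v ∈ A ↔ u ∈ B))
    (hcard : A.card = B.card)
    (F : V → V → ℝ)
    (hsym : ∀ v u : V, G.Adj v u → F v u = F u v) :
    ¬ (∀ v ∈ A, ∀ u ∈ B,
        Real.sqrt (∑ w ∈ G.neighborFinset v, (F v w) ^ 2) <
          Real.sqrt (∑ w ∈ G.neighborFinset u, (F u w) ^ 2)) := by
  intro hsep
  have hA : A.Nonempty := by
    obtain ⟨v⟩ := hconn.nonempty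
    by_cases hv : v ∈ A
    · exact ⟨v, hv⟩
    · obtain ⟨u, hu⟩ : B.Nonempty := ⟨v, not_not.1 (mt (hpart v).2 hv)⟩
      exact Finset.card_pos.1 (hcard ▸ Finset.card_pos.2 ⟨u, hu⟩)
  obtain ⟨v, hv, u, hu, hle⟩ := Finset.exists_le_of_card_eq_of_sum_eq hA hcard
    (G.sum_sum_neighborFinset_eq_of_bipartite hbip (f := fun v w => F v w ^ 2)
      fun v w hvw => by rw [hsym v w hvw])
  exact hle.not_gt ((Real.sqrt_lt_sqrt_iff (by positivity)).1 (hsep v hv u hu))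

/-- Let `G` be a connected bipartite graph with parts `A`, `B` of equal
size.  For a sheaf in `H¹_sym` (one-dimensional stalks, symmetric non-zero restriction
maps `F v u = F u v ≠ 0` on edges), the harmonic eigenvector of the normalised sheaf
Laplacian, `y v = sqrt (Σ_{v⊴e} F_{v⊴e}²)`, cannot satisfy `y v < y u` for all
`v ∈ A`, `u ∈ B`.  (Hence diffusion cannot linearly separate the two partitions in the
infinite-time limit.) -/
theorem bipartite_H1sym_no_separation {V : Type*} [Fintype V] [DecidableEq V]
    (G : SimpleGraph V) [DecidableRel G.Adj] (hconn : G.Connected)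
    (A B : Finset V)
    (hpart : ∀ v : V, v ∈ A ↔ v ∉ B)
    (hbip : ∀ v u : V, G.Adj v u → (v ∈ A ↔ u ∈ B))
    (hcard : A.card = B.card)
    (F : V → V → ℝ)
    (hsym : ∀ v u : V, G.Adj v u → F v u = F u v)
    (hne : ∀ v u : V, G.Adj v u → F v u ≠ 0) :
    ¬ (∀ v ∈ A, ∀ u ∈ B,
        Real.sqrt (∑ w ∈ G.neighborFinset v, (F v w) ^ 2) <
          Real.sqrt (∑ w ∈ G.neighborFinset u, (F u w) ^ 2)) :=
  bipartite_H1sym_no_separation_general G hconn A B hpart hbip hcard F hsym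
end

section
/- Let G be a connected graph with C ≥ 3 classes and F any sheaf with one-dimensional stalks and non-zero (invertible) restriction maps. Then the diffusion process dX/dt = −Δ_F X cannot yield limiting node features that linearly separate all C classes, for any initial conditions X(0) ∈ R^{n×f}. -/
/-!
For `y ∈ ker Δ_F` the rescaled vector `z = D^{-1/2} y` satisfies
`2 zᵀ L_F z = Σ_{v ~ u} (F_{vu} z_v - F_{uv} z_u)² = 0`, so `z` is a global section of the sheaf.
With invertible restriction maps, a global section over a connected graph is fixed by its value at
one vertex, hence every limiting feature vector is `X v = s_v • c` for a single vector `c`.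
One-vs-rest affine scores then become affine functions of the scalar `s_v`. Of three nodes of
distinct classes one has the middle value of `s`, and an affine function positive there is
positive at one of the other two.
-/

open Matrix BigOperators

open Finset

namespace SheafDiffusion

variable {V : Type*} (G : SimpleGraph V) (F : V → V → ℝ)

/-- `z` is a global section (an element of `H⁰`) of the sheaf with one-dimensional stalks. -/
def IsGlobalSection (z : V → ℝ) : Prop :=
  ∀ ⦃v u⦄, G.Adj v u → F v u * z v = F u v * z u

section

variable {G F}

theorem exists_forall_isGlobalSection_apply_eq_mul_of_walk
    (hne : ∀ v u : V, G.Adj v u → F v u ≠ 0) {a c : V} (p : G.Walk a c) :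
    ∃ r : ℝ, ∀ z, IsGlobalSection G F z → z c = r * z a := by
  induction p with
  | nil => exact ⟨1, fun z _ => (one_mul _).symm⟩
  | @cons a b c hab _ ih =>
    obtain ⟨r, hr⟩ := ih
    refine ⟨r * (F a b / F b a), fun z hz => ?_⟩
    have hb : z b = F a b / F b a * z a := by
      rw [div_mul_eq_mul_div, eq_div_iff (hne b a hab.symm), hz hab, mul_comm]
    rw [hr z hz, hb, mul_assoc]

theorem exists_forall_isGlobalSection_eq_mul (hconn : G.Preconnected)
    (hne : ∀ v u : V, G.Adj v u → F v u ≠ 0) (v₀ : V) :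
    ∃ h : V → ℝ, ∀ z, IsGlobalSection G F z → ∀ v, z v = h v * z v₀ := by
  choose h hh using fun v =>
    exists_forall_isGlobalSection_apply_eq_mul_of_walk hne (hconn v₀ v).some
  exact ⟨h, fun z hz v => hh v z hz⟩

end

variable [Fintype V] [DecidableRel G.Adj]

noncomputable def sheafDegree (v : V) : ℝ :=
  ∑ w ∈ G.neighborFinset v, F v w ^ 2

theorem sheafDegree_pos (hconn : G.Preconnected) [Nontrivial V]
    (hne : ∀ v u : V, G.Adj v u → F v u ≠ 0) (v : V) : 0 < sheafDegree G F v := by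
  obtain ⟨u, hu⟩ := hconn.exists_adj_of_nontrivial v
  have := hne v u hu
  exact sum_pos' (fun _ _ => sq_nonneg _) ⟨u, (G.mem_neighborFinset v u).2 hu, by positivity⟩

theorem sum_neighborFinset_comm {M : Type*} [AddCommMonoid M] (g : V → V → M) :
    ∑ v, ∑ u ∈ G.neighborFinset v, g v u = ∑ v, ∑ u ∈ G.neighborFinset v, g u v := by
  simp only [SimpleGraph.neighborFinset_eq_filter, sum_filter]
  rw [sum_comm]
  simp only [G.adj_comm]

variable [DecidableEq V]

noncomputable def sheafLaplacian : Matrix V V ℝ :=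
  fun v u => if v = u then sheafDegree G F v else if G.Adj v u then -(F v u * F u v) else 0

theorem normSheafLaplacian1_eq :
    normSheafLaplacian1 G F =
      diagonal (fun v => (√(sheafDegree G F v))⁻¹) * sheafLaplacian G F *
        diagonal (fun v => (√(sheafDegree G F v))⁻¹) := by
  ext v u
  simp only [normSheafLaplacian1, sheafLaplacian, sheafDegree, mul_diagonal, diagonal_mul]
  ring

theorem sheafLaplacian_mulVec_apply (z : V → ℝ) (v : V) :
    (sheafLaplacian G F *ᵥ z) v =
      ∑ u ∈ G.neighborFinset v, F v u * (F v u * z v - F u v * z u) := by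
  calc (sheafLaplacian G F *ᵥ z) v
      = ∑ u, ((if v = u then sheafDegree G F v * z u else 0) +
          if G.Adj v u then -(F v u * F u v * z u) else 0) := by
        refine sum_congr rfl fun u _ => ?_
        by_cases h : v = u
        · subst h; simp [sheafLaplacian]
        · by_cases hadj : G.Adj v u <;> simp [sheafLaplacian, h, hadj]
    _ = sheafDegree G F v * z v - ∑ u ∈ G.neighborFinset v, F v u * F u v * z u := by
        rw [sum_add_distrib, sum_ite_eq, if_pos (mem_univ v), ← sum_filter,
          ← SimpleGraph.neighborFinset_eq_filter, sum_neg_distrib, sub_eq_add_neg]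
    _ = _ := by
        rw [sheafDegree, sum_mul, ← sum_sub_distrib]
        exact sum_congr rfl fun u _ => by ring

theorem two_mul_dotProduct_sheafLaplacian_mulVec (z : V → ℝ) :
    2 * (z ⬝ᵥ (sheafLaplacian G F *ᵥ z)) =
      ∑ v, ∑ u ∈ G.neighborFinset v, (F v u * z v - F u v * z u) ^ 2 := by
  have hform : z ⬝ᵥ (sheafLaplacian G F *ᵥ z) =
      ∑ v, ∑ u ∈ G.neighborFinset v, F v u * z v * (F v u * z v - F u v * z u) := by
    simp only [dotProduct, sheafLaplacian_mulVec_apply, mul_sum]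
    exact sum_congr rfl fun v _ => sum_congr rfl fun u _ => by ring
  have hswap := sum_neighborFinset_comm G
    fun v u => F v u * z v * (F v u * z v - F u v * z u)
  rw [two_mul, hform]
  nth_rewrite 2 [hswap]
  rw [← sum_add_distrib]
  exact sum_congr rfl fun v _ => by rw [← sum_add_distrib]; exact sum_congr rfl fun u _ => by ring

theorem isGlobalSection_of_sheafLaplacian_mulVec_eq_zero {z : V → ℝ}
    (hz : sheafLaplacian G F *ᵥ z = 0) : IsGlobalSection G F z := by
  intro v u hadj
  have hsum := two_mul_dotProduct_sheafLaplacian_mulVec G F z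
  rw [hz, dotProduct_zero, mul_zero, eq_comm,
    sum_eq_zero_iff_of_nonneg fun _ _ => sum_nonneg fun _ _ => sq_nonneg _] at hsum
  have hv := (sum_eq_zero_iff_of_nonneg fun _ _ => sq_nonneg _).1 (hsum v (mem_univ v)) u
    ((G.mem_neighborFinset v u).2 hadj)
  exact sub_eq_zero.1 (pow_eq_zero_iff two_ne_zero |>.1 hv)

theorem isGlobalSection_of_normSheafLaplacian1_mulVec_eq_zero
    (hdeg : ∀ v, 0 < sheafDegree G F v) {y : V → ℝ} (hy : normSheafLaplacian1 G F *ᵥ y = 0) :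
    IsGlobalSection G F fun v => (√(sheafDegree G F v))⁻¹ * y v := by
  apply isGlobalSection_of_sheafLaplacian_mulVec_eq_zero
  have hdiag (d x : V → ℝ) : diagonal d *ᵥ x = fun v => d v * x v := funext (mulVec_diagonal d x)
  rw [normSheafLaplacian1_eq, Matrix.mul_assoc, ← mulVec_mulVec, ← mulVec_mulVec, hdiag,
    hdiag] at hy
  ext v
  have hv := congrFun hy v
  simpa [(Real.sqrt_pos.2 (hdeg v)).ne'] using hv

variable {G F}

theorem exists_eq_smul_of_normSheafLaplacian1_mulVec_eq_zero [Nontrivial V] {ι : Type*}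
    (hconn : G.Preconnected) (hne : ∀ v u : V, G.Adj v u → F v u ≠ 0) (X : V → ι → ℝ)
    (hker : ∀ j, normSheafLaplacian1 G F *ᵥ (fun v => X v j) = 0) :
    ∃ (s : V → ℝ) (c : ι → ℝ), ∀ v, X v = s v • c := by
  obtain ⟨v₀⟩ := (inferInstance : Nonempty V)
  have hdeg := sheafDegree_pos G F hconn hne
  obtain ⟨h, hh⟩ := exists_forall_isGlobalSection_eq_mul hconn hne v₀
  refine ⟨fun v => √(sheafDegree G F v) * h v, fun j => (√(sheafDegree G F v₀))⁻¹ * X v₀ j,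
    fun v => funext fun j => ?_⟩
  have hsec := hh _ (isGlobalSection_of_normSheafLaplacian1_mulVec_eq_zero G F hdeg (hker j)) v
  have hsqrt : √(sheafDegree G F v) ≠ 0 := (Real.sqrt_pos.2 (hdeg v)).ne'
  simp only [Pi.smul_apply, smul_eq_mul]
  rw [mul_assoc, ← hsec, mul_inv_cancel_left₀ hsqrt]

end SheafDiffusion

theorem affine_nonpos_of_mem_uIcc {a b s t₁ t₂ : ℝ} (hs : s ∈ Set.uIcc t₁ t₂)
    (h₁ : a * t₁ + b ≤ 0) (h₂ : a * t₂ + b ≤ 0) : a * s + b ≤ 0 := by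
  rcases Set.mem_uIcc.1 hs with ⟨hl, hr⟩ | ⟨hl, hr⟩ <;> rcases le_total 0 a with ha | ha <;>
    nlinarith

theorem mem_uIcc_or_mem_uIcc_or_mem_uIcc (x y z : ℝ) :
    x ∈ Set.uIcc y z ∨ y ∈ Set.uIcc x z ∨ z ∈ Set.uIcc x y := by
  simp only [Set.mem_uIcc]
  rcases le_total x y with hxy | hxy <;> rcases le_total y z with hyz | hyz <;>
    rcases le_total x z with hxz | hxz <;> tauto

section OneVsRest

variable {ι κ : Type*} {cls : ι → κ} {t : ι → ℝ} {a b : κ → ℝ}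

theorem false_of_oneVsRest_of_mem_uIcc (hsep : ∀ k i, cls i = k ↔ 0 < a k * t i + b k)
    {i j l : ι} (hj : t j ∈ Set.uIcc (t i) (t l)) (hij : cls i ≠ cls j) (hlj : cls l ≠ cls j) :
    False := by
  have hnonpos : ∀ {m}, cls m ≠ cls j → a (cls j) * t m + b (cls j) ≤ 0 :=
    fun hm => not_lt.1 fun hpos => hm ((hsep _ _).2 hpos)
  have hpos : 0 < a (cls j) * t j + b (cls j) := (hsep _ _).1 rfl
  exact hpos.not_ge (affine_nonpos_of_mem_uIcc hj (hnonpos hij) (hnonpos hlj))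

theorem false_of_oneVsRest_of_three_classes (hsep : ∀ k i, cls i = k ↔ 0 < a k * t i + b k)
    {i j l : ι} (hij : cls i ≠ cls j) (hjl : cls j ≠ cls l) (hil : cls i ≠ cls l) : False := by
  rcases mem_uIcc_or_mem_uIcc_or_mem_uIcc (t i) (t j) (t l) with h | h | h
  · exact false_of_oneVsRest_of_mem_uIcc hsep h hij.symm hil.symm
  · exact false_of_oneVsRest_of_mem_uIcc hsep h hij hjl.symm
  · exact false_of_oneVsRest_of_mem_uIcc hsep h hil hjl

end OneVsRest

open SheafDiffusion in
/-- Let `G` be a connected graph whose nodes are partitioned into `C ≥ 3`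
classes, and let `F` be any sheaf with one-dimensional stalks and non-zero (invertible)
restriction maps.  Then the diffusion `dX/dt = -Δ_F X` cannot yield limiting features that
linearly separate all `C` classes for any initial conditions: any feature matrix whose
columns lie in `ker Δ_F` (as the diffusion limit does) admits no family of affine
hyperplanes each strictly separating one class from the others. -/
theorem no_linear_separation_three_classes_1d {V : Type*} [Fintype V] [DecidableEq V]
    (G : SimpleGraph V) [DecidableRel G.Adj] (hconn : G.Connected)
    (C : ℕ) (hC : 3 ≤ C) (cls : V → Fin C) (hsurj : Function.Surjective cls)
    (F : V → V → ℝ) (hne : ∀ v u : V, G.Adj v u → F v u ≠ 0) :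
    ∀ (f : ℕ) (X : V → Fin f → ℝ),
      (∀ j : Fin f, (normSheafLaplacian1 G F).mulVec (fun v => X v j) = 0) →
      ¬ ∃ (w : Fin C → Fin f → ℝ) (b : Fin C → ℝ),
          ∀ (k : Fin C) (v : V), (cls v = k ↔ 0 < (∑ i, w k i * X v i) + b k) := by
  rintro f X hker ⟨w, b, hsep⟩
  obtain ⟨v₀, hv₀⟩ := hsurj ⟨0, by omega⟩
  obtain ⟨v₁, hv₁⟩ := hsurj ⟨1, by omega⟩
  obtain ⟨v₂, hv₂⟩ := hsurj ⟨2, by omega⟩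
  have h01 : cls v₀ ≠ cls v₁ := by simp [hv₀, hv₁]
  have h12 : cls v₁ ≠ cls v₂ := by simp [hv₁, hv₂]
  have h02 : cls v₀ ≠ cls v₂ := by simp [hv₀, hv₂]
  have : Nontrivial V := nontrivial_of_ne v₀ v₁ fun h => h01 (congrArg cls h)
  obtain ⟨s, c, hX⟩ :=
    exists_eq_smul_of_normSheafLaplacian1_mulVec_eq_zero hconn.preconnected hne X hker
  have hscore : ∀ k v, ∑ i, w k i * X v i = (w k ⬝ᵥ c) * s v := fun k v => by
    change w k ⬝ᵥ X v = _
    rw [hX v, dotProduct_smul, smul_eq_mul, mul_comm]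
  simp only [hscore] at hsep
  exact false_of_oneVsRest_of_three_classes hsep h01 h12 h02
end

section
/- Let F be a sheaf with all stalks R and restriction maps satisfying F_{v⊴e}F_{u⊴e} > 0 for every edge e = (v,u), let P = I − Δ_F, let W be an f×f weight matrix, and let σ be ReLU or LeakyReLU applied entrywise. Then for Y = σ(P X W), the sheaf Dirichlet energy satisfies E_F(Y) ≤ λ* ‖W^T‖²₂ E_F(X), where λ* = max_{i: λ_i > 0} (λ_i − 1)² over the non-zero eigenvalues λ_i of Δ_F. -/
open Matrix BigOperators

/-- The sheaf Dirichlet energy `E_F(X) = trace(Xᵀ Δ_F X)` of a feature matrix `X`. -/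
noncomputable def dirichletEnergy {V : Type*} [Fintype V] {f : ℕ}
    (Δ : Matrix V V ℝ) (X : Matrix V (Fin f) ℝ) : ℝ :=
  Matrix.trace (Xᵀ * Δ * X)

/-!
With `c v u = F v u / √D_v` and `D_v = ∑_{w ~ v} F v w ²`, the energy is half the sum over
ordered edges of `‖c v u • X v - c u v • X u‖²`. Right multiplication by `W` acts on each of
these edge differences by `Wᵀ`, and a 1-Lipschitz, positively homogeneous activation does not lengthen any
of them as long as `c v u * c u v ≥ 0`. Finally `P Δ P = g(Δ)` with `g x = (1 - x)² x`, and
`g μ ≤ λ μ` on the spectrum of `Δ`: trivially at `μ = 0`, and by the hypothesis on `λ` elsewhere,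
since the spectrum is nonnegative.
-/

lemma lipschitzWith_leakyReLU {a : ℝ} (ha0 : 0 ≤ a) (ha1 : a ≤ 1) :
    LipschitzWith 1 (fun t : ℝ => max t (a * t)) :=
  LipschitzWith.of_dist_le_mul fun p q => by
    rw [NNReal.coe_one, one_mul, Real.dist_eq, Real.dist_eq]
    refine (abs_max_sub_max_le_max _ _ _ _).trans (max_le le_rfl ?_)
    rw [← mul_sub, abs_mul, abs_of_nonneg ha0]
    exact mul_le_of_le_one_left (abs_nonneg _) ha1

lemma leakyReLU_mul (a : ℝ) {c : ℝ} (hc : 0 ≤ c) (t : ℝ) :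
    max (c * t) (a * (c * t)) = c * max t (a * t) := by
  rw [mul_max_of_nonneg _ _ hc, mul_left_comm]

lemma abs_mul_apply_sub_mul_apply_le {σ : ℝ → ℝ} (hσ : LipschitzWith 1 σ)
    (hhom : ∀ c, 0 ≤ c → ∀ t, σ (c * t) = c * σ t) {c c' : ℝ} (hcc' : 0 ≤ c * c') (s t : ℝ) :
    |c * σ s - c' * σ t| ≤ |c * s - c' * t| := by
  have hσ' : ∀ p q, |σ p - σ q| ≤ |p - q| := fun p q => by
    simpa only [NNReal.coe_one, one_mul, Real.dist_eq] using hσ.dist_le_mul p q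
  rcases mul_nonneg_iff.mp hcc' with ⟨hc, hc'⟩ | ⟨hc, hc'⟩
  · rw [← hhom c hc, ← hhom c' hc']
    exact hσ' _ _
  · have hneg : c * σ s - c' * σ t = -(σ (-c * s) - σ (-c' * t)) := by
      rw [hhom _ (neg_nonneg.mpr hc), hhom _ (neg_nonneg.mpr hc')]
      ring
    rw [hneg, abs_neg]
    refine (hσ' _ _).trans_eq ?_
    rw [← abs_neg]
    congr 1
    ring

open scoped MatrixOrder in
lemma posSemidef_smul_sub_one_sub_mul_mul {n : Type*} [Fintype n] [DecidableEq n]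
    {Δ : Matrix n n ℝ} (hΔ : Δ.IsHermitian) (hpsd : Δ.PosSemidef) {lam : ℝ}
    (hlam : ∀ i, hΔ.eigenvalues i ≠ 0 → (hΔ.eigenvalues i - 1) ^ 2 ≤ lam) :
    (lam • Δ - (1 - Δ) * Δ * (1 - Δ)).PosSemidef := by
  have hsa : IsSelfAdjoint Δ := hΔ
  have hcfc : lam • Δ - (1 - Δ) * Δ * (1 - Δ) =
      cfc (fun x => lam * x - (1 - x) * x * (1 - x)) Δ := by
    rw [cfc_sub (fun x => lam * x) (fun x => (1 - x) * x * (1 - x)),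
      cfc_const_mul lam (fun x => x), cfc_mul (fun x => (1 - x) * x) (fun x => 1 - x),
      cfc_mul (fun x => 1 - x) (fun x => x), cfc_sub (fun _ => 1) (fun x => x),
      cfc_const_one ℝ Δ, cfc_id' ℝ Δ]
  rw [← Matrix.nonneg_iff_posSemidef, hcfc]
  refine cfc_nonneg fun x hx => ?_
  obtain ⟨i, rfl⟩ := hΔ.spectrum_real_eq_range_eigenvalues ▸ hx
  have hi := hpsd.eigenvalues_nonneg i
  by_cases h0 : hΔ.eigenvalues i = 0
  · simp [h0]
  · nlinarith [hlam i h0]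

section Energy

variable {n : Type*} [Fintype n] {f : ℕ}

lemma dirichletEnergy_eq_sum_dotProduct (Δ : Matrix n n ℝ) (M : Matrix n (Fin f) ℝ) :
    dirichletEnergy Δ M = ∑ v, ∑ u, Δ v u * (M v ⬝ᵥ M u) := by
  simp only [dirichletEnergy, Matrix.trace, Matrix.diag, Matrix.mul_apply,
    Matrix.transpose_apply, dotProduct, Finset.sum_mul, Finset.mul_sum]
  conv_rhs => rw [Finset.sum_comm]
  rw [Finset.sum_comm]
  refine Finset.sum_congr rfl fun u _ => ?_
  rw [Finset.sum_comm]
  exact Finset.sum_congr rfl fun v _ => Finset.sum_congr rfl fun k _ => by ring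

lemma dirichletEnergy_mul_left (Δ P : Matrix n n ℝ) (X : Matrix n (Fin f) ℝ) :
    dirichletEnergy Δ (P * X) = dirichletEnergy (Pᵀ * Δ * P) X := by
  simp only [dirichletEnergy, Matrix.transpose_mul, Matrix.mul_assoc]

lemma dirichletEnergy_smul (c : ℝ) (Δ : Matrix n n ℝ) (X : Matrix n (Fin f) ℝ) :
    dirichletEnergy (c • Δ) X = c * dirichletEnergy Δ X := by
  rw [dirichletEnergy, Matrix.mul_smul, Matrix.smul_mul, Matrix.trace_smul, smul_eq_mul,
    dirichletEnergy]

lemma dirichletEnergy_le_of_posSemidef_sub {Δ₁ Δ₂ : Matrix n n ℝ} (h : (Δ₂ - Δ₁).PosSemidef)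
    (X : Matrix n (Fin f) ℝ) : dirichletEnergy Δ₁ X ≤ dirichletEnergy Δ₂ X := by
  have := (h.conjTranspose_mul_mul_same X).trace_nonneg
  rw [Matrix.conjTranspose_eq_transpose_of_trivial, Matrix.mul_sub, Matrix.sub_mul,
    Matrix.trace_sub] at this
  exact sub_nonneg.mp this

lemma dirichletEnergy_one_sub_mul_le [DecidableEq n] {Δ : Matrix n n ℝ} (hΔ : Δ.IsHermitian)
    (hpsd : Δ.PosSemidef) {lam : ℝ}
    (hlam : ∀ i, hΔ.eigenvalues i ≠ 0 → (hΔ.eigenvalues i - 1) ^ 2 ≤ lam)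
    (X : Matrix n (Fin f) ℝ) :
    dirichletEnergy Δ ((1 - Δ) * X) ≤ lam * dirichletEnergy Δ X := by
  have hsymm : (1 - Δ)ᵀ = 1 - Δ := by
    rw [Matrix.transpose_sub, Matrix.transpose_one, ← Matrix.conjTranspose_eq_transpose_of_trivial,
      hΔ.eq]
  rw [dirichletEnergy_mul_left, hsymm, ← dirichletEnergy_smul]
  exact dirichletEnergy_le_of_posSemidef_sub (posSemidef_smul_sub_one_sub_mul_mul hΔ hpsd hlam) X

end Energy

section SheafLaplacian

variable {V : Type*} [Fintype V] (G : SimpleGraph V) [DecidableRel G.Adj] (F : V → V → ℝ)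

lemma sum_neighborFinset_comm {M : Type*} [AddCommMonoid M] (g : V → V → M) :
    ∑ v, ∑ u ∈ G.neighborFinset v, g v u = ∑ v, ∑ u ∈ G.neighborFinset v, g u v := by
  simp only [SimpleGraph.neighborFinset_eq_filter, Finset.sum_filter]
  rw [Finset.sum_comm]
  simp only [G.adj_comm]

noncomputable def normRestriction (v u : V) : ℝ :=
  F v u / √(∑ w ∈ G.neighborFinset v, F v w ^ 2)

noncomputable def coboundary {ι : Type*} (M : Matrix V ι ℝ) (v u : V) : ι → ℝ :=
  normRestriction G F v u • M v - normRestriction G F u v • M u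

lemma coboundary_mul {ι κ : Type*} [Fintype ι] (M : Matrix V ι ℝ) (W : Matrix ι κ ℝ) (v u : V) :
    coboundary G F (M * W) v u = coboundary G F M v u ᵥ* W := by
  ext k
  simp only [coboundary, Pi.sub_apply, Pi.smul_apply, smul_eq_mul, Matrix.mul_apply,
    Matrix.vecMul, dotProduct, Finset.mul_sum, ← Finset.sum_sub_distrib]
  exact Finset.sum_congr rfl fun j _ => by ring

lemma coboundary_map_dotProduct_le {ι : Type*} [Fintype ι] {σ : ℝ → ℝ} (hσ : LipschitzWith 1 σ)
    (hhom : ∀ c, 0 ≤ c → ∀ t, σ (c * t) = c * σ t) {v u : V} (hvu : 0 ≤ F v u * F u v)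
    (M : Matrix V ι ℝ) :
    coboundary G F (M.map σ) v u ⬝ᵥ coboundary G F (M.map σ) v u ≤
      coboundary G F M v u ⬝ᵥ coboundary G F M v u := by
  have hcc' : 0 ≤ normRestriction G F v u * normRestriction G F u v := by
    rw [normRestriction, normRestriction, div_mul_div_comm]
    positivity
  refine Finset.sum_le_sum fun k _ => ?_
  simp only [← sq, coboundary, Pi.sub_apply, Pi.smul_apply, smul_eq_mul, Matrix.map_apply]
  exact sq_le_sq.mpr (abs_mul_apply_sub_mul_apply_le hσ hhom hcc' _ _)

variable [DecidableEq V]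

lemma normSheafLaplacian1_apply (v u : V) :
    normSheafLaplacian1 G F v u =
      (if v = u then ∑ w ∈ G.neighborFinset v, normRestriction G F v w ^ 2 else 0) -
        if G.Adj v u then normRestriction G F v u * normRestriction G F u v else 0 := by
  simp only [normSheafLaplacian1, normRestriction]
  by_cases hvu : v = u
  · subst hvu
    simp only [if_true, G.irrefl, if_false, sub_zero, div_pow, ← Finset.sum_div, ← sq]
  · by_cases hadj : G.Adj v u
    · simp only [hvu, hadj, if_true, if_false, zero_sub, neg_div, mul_div_mul_comm]
    · simp [hvu, hadj]

lemma isHermitian_normSheafLaplacian1 : (normSheafLaplacian1 G F).IsHermitian := by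
  ext v u
  rw [Matrix.conjTranspose_apply, star_trivial, normSheafLaplacian1_apply,
    normSheafLaplacian1_apply]
  by_cases hvu : v = u
  · subst hvu
    rfl
  · simp [hvu, Ne.symm hvu, G.adj_comm, mul_comm]

lemma dirichletEnergy_normSheafLaplacian1 {f : ℕ} (M : Matrix V (Fin f) ℝ) :
    dirichletEnergy (normSheafLaplacian1 G F) M =
      (1 / 2) * ∑ v, ∑ u ∈ G.neighborFinset v, coboundary G F M v u ⬝ᵥ coboundary G F M v u := by
  set c := normRestriction G F
  have hsq : ∀ v u, coboundary G F M v u ⬝ᵥ coboundary G F M v u =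
      c v u ^ 2 * (M v ⬝ᵥ M v) - 2 * (c v u * c u v * (M v ⬝ᵥ M u)) + c u v ^ 2 * (M u ⬝ᵥ M u) := by
    intro v u
    simp only [coboundary, sub_dotProduct, dotProduct_sub, smul_dotProduct, dotProduct_smul,
      smul_eq_mul, dotProduct_comm (M u) (M v)]
    ring
  have hswap := sum_neighborFinset_comm G (fun v u => c v u ^ 2 * (M v ⬝ᵥ M v))
  simp only [hsq, Finset.sum_add_distrib, Finset.sum_sub_distrib, ← Finset.mul_sum, ← hswap]
  rw [dirichletEnergy_eq_sum_dotProduct]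
  simp only [normSheafLaplacian1_apply, sub_mul, ite_mul, zero_mul, Finset.sum_sub_distrib,
    Finset.sum_ite_eq, Finset.mem_univ, if_true, ← Finset.sum_filter,
    ← SimpleGraph.neighborFinset_eq_filter, Finset.sum_mul]
  ring

lemma dirichletEnergy_normSheafLaplacian1_nonneg {f : ℕ} (M : Matrix V (Fin f) ℝ) :
    0 ≤ dirichletEnergy (normSheafLaplacian1 G F) M := by
  rw [dirichletEnergy_normSheafLaplacian1]
  exact mul_nonneg (by norm_num) (Finset.sum_nonneg fun v _ => Finset.sum_nonneg fun u _ =>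
    dotProduct_self_star_nonneg _)

lemma posSemidef_normSheafLaplacian1 : (normSheafLaplacian1 G F).PosSemidef := by
  refine Matrix.PosSemidef.of_dotProduct_mulVec_nonneg (isHermitian_normSheafLaplacian1 G F)
    fun x => ?_
  have hcol : star x ⬝ᵥ (normSheafLaplacian1 G F *ᵥ x) =
      dirichletEnergy (normSheafLaplacian1 G F) (Matrix.replicateCol (Fin 1) x) := by
    simp only [dirichletEnergy_eq_sum_dotProduct, star_trivial, dotProduct, Matrix.mulVec,
      Matrix.replicateCol_apply, Fin.sum_univ_one, Finset.mul_sum]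
    exact Finset.sum_congr rfl fun v _ => Finset.sum_congr rfl fun u _ => by ring
  exact hcol ▸ dirichletEnergy_normSheafLaplacian1_nonneg G F _

lemma dirichletEnergy_normSheafLaplacian1_le_of_coboundary {f : ℕ} {M N : Matrix V (Fin f) ℝ}
    {C : ℝ} (h : ∀ v u, G.Adj v u → coboundary G F N v u ⬝ᵥ coboundary G F N v u ≤
      C * (coboundary G F M v u ⬝ᵥ coboundary G F M v u)) :
    dirichletEnergy (normSheafLaplacian1 G F) N ≤
      C * dirichletEnergy (normSheafLaplacian1 G F) M := by
  rw [dirichletEnergy_normSheafLaplacian1, dirichletEnergy_normSheafLaplacian1, mul_left_comm]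
  refine mul_le_mul_of_nonneg_left ?_ (by norm_num)
  rw [Finset.mul_sum]
  refine Finset.sum_le_sum fun v _ => ?_
  rw [Finset.mul_sum]
  exact Finset.sum_le_sum fun u hu => h v u ((G.mem_neighborFinset v u).mp hu)

lemma dirichletEnergy_mul_le {f : ℕ} (M : Matrix V (Fin f) ℝ) {W : Matrix (Fin f) (Fin f) ℝ}
    {nW : ℝ} (hnW : ∀ x : Fin f → ℝ, (Wᵀ.mulVec x) ⬝ᵥ (Wᵀ.mulVec x) ≤ nW ^ 2 * (x ⬝ᵥ x)) :
    dirichletEnergy (normSheafLaplacian1 G F) (M * W) ≤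
      nW ^ 2 * dirichletEnergy (normSheafLaplacian1 G F) M :=
  dirichletEnergy_normSheafLaplacian1_le_of_coboundary G F fun v u _ => by
    simpa only [coboundary_mul, Matrix.mulVec_transpose] using hnW (coboundary G F M v u)

lemma dirichletEnergy_map_le {f : ℕ} {σ : ℝ → ℝ} (hσ : LipschitzWith 1 σ)
    (hhom : ∀ c, 0 ≤ c → ∀ t, σ (c * t) = c * σ t) (hF : ∀ v u, G.Adj v u → 0 ≤ F v u * F u v)
    (M : Matrix V (Fin f) ℝ) :
    dirichletEnergy (normSheafLaplacian1 G F) (M.map σ) ≤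
      dirichletEnergy (normSheafLaplacian1 G F) M := by
  simpa only [one_mul] using dirichletEnergy_normSheafLaplacian1_le_of_coboundary G F (C := 1)
    fun v u huv => by
      simpa only [one_mul] using coboundary_map_dotProduct_le G F hσ hhom (hF v u huv) M

end SheafLaplacian

theorem scn_energy_decrease_1d_general {V : Type*} [Fintype V] [DecidableEq V]
    (G : SimpleGraph V) [DecidableRel G.Adj]
    (F : V → V → ℝ)
    (hpos : ∀ v u : V, G.Adj v u → 0 < F v u * F u v)
    (hherm : (normSheafLaplacian1 G F).IsHermitian)
    (lam : ℝ)
    (hlam : ∀ i : V, hherm.eigenvalues i ≠ 0 → (hherm.eigenvalues i - 1) ^ 2 ≤ lam)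
    {f : ℕ} (W : Matrix (Fin f) (Fin f) ℝ)
    (nW : ℝ)
    (hnW : ∀ x : Fin f → ℝ, (Wᵀ.mulVec x) ⬝ᵥ (Wᵀ.mulVec x) ≤ nW ^ 2 * (x ⬝ᵥ x))
    (a : ℝ) (ha0 : 0 ≤ a) (ha1 : a ≤ 1)
    (X : Matrix V (Fin f) ℝ) :
    dirichletEnergy (normSheafLaplacian1 G F)
        (((1 - normSheafLaplacian1 G F) * X * W).map (fun t => max t (a * t))) ≤
      lam * nW ^ 2 * dirichletEnergy (normSheafLaplacian1 G F) X := by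
  have hσ := dirichletEnergy_map_le G F (lipschitzWith_leakyReLU ha0 ha1)
    (fun c hc t => leakyReLU_mul a hc t) (fun v u huv => (hpos v u huv).le)
    ((1 - normSheafLaplacian1 G F) * X * W)
  have hW := dirichletEnergy_mul_le G F ((1 - normSheafLaplacian1 G F) * X) hnW
  have hP := dirichletEnergy_one_sub_mul_le hherm (posSemidef_normSheafLaplacian1 G F) hlam X
  calc _ ≤ _ := hσ
    _ ≤ _ := hW
    _ ≤ nW ^ 2 * (lam * dirichletEnergy (normSheafLaplacian1 G F) X) := by gcongr
    _ = _ := by ring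

/-- Let `F` be a sheaf with one-dimensional stalks and
`F_{v⊴e} F_{u⊴e} > 0` on every edge, `P = I − Δ_F`, `W` an `f × f` weight matrix, and `σ`
(Leaky)ReLU, `σ(t) = max (t, a·t)` with `0 ≤ a ≤ 1`.  Then for `Y = σ(P X W)` one has
`E_F(Y) ≤ λ* ‖Wᵀ‖₂² E_F(X)`, where `λ*` bounds `(λ_i − 1)²` over the non-zero eigenvalues
`λ_i` of `Δ_F` and `‖Wᵀ‖₂` is the spectral norm of `Wᵀ` (both encoded here as upper
bounds `lam` and `nW`). -/
theorem scn_energy_decrease_1d {V : Type*} [Fintype V] [DecidableEq V]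
    (G : SimpleGraph V) [DecidableRel G.Adj]
    (F : V → V → ℝ)
    (hpos : ∀ v u : V, G.Adj v u → 0 < F v u * F u v)
    (hherm : (normSheafLaplacian1 G F).IsHermitian)
    (lam : ℝ)
    (hlam : ∀ i : V, hherm.eigenvalues i ≠ 0 → (hherm.eigenvalues i - 1) ^ 2 ≤ lam)
    {f : ℕ} (W : Matrix (Fin f) (Fin f) ℝ)
    (nW : ℝ) (hnW0 : 0 ≤ nW)
    (hnW : ∀ x : Fin f → ℝ, (Wᵀ.mulVec x) ⬝ᵥ (Wᵀ.mulVec x) ≤ nW ^ 2 * (x ⬝ᵥ x))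
    (a : ℝ) (ha0 : 0 ≤ a) (ha1 : a ≤ 1)
    (X : Matrix V (Fin f) ℝ) :
    dirichletEnergy (normSheafLaplacian1 G F)
        (((1 - normSheafLaplacian1 G F) * X * W).map (fun t => max t (a * t))) ≤
      lam * nW ^ 2 * dirichletEnergy (normSheafLaplacian1 G F) X :=
  scn_energy_decrease_1d_general G F hpos hherm lam hlam W nW hnW a ha0 ha1 X
end

section
/- Let Δ be a symmetric positive semi-definite matrix with eigenvalues in [0,2], and let P = I − Δ. Then for every vector x, x^T P Δ P x ≤ λ* · x^T Δ x, where λ* = max over non-zero eigenvalues λ_i of Δ of (λ_i − 1)². -/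
/-!
In an orthonormal eigenbasis of `Δ`, both quadratic forms become weighted sums `∑ f(λᵢ) yᵢ²`,
with weights `f(t) = (1 - t) t (1 - t) = t (t - 1)²` and `f(t) = λ* t` respectively, since
`(1 - Δ) Δ (1 - Δ)` is obtained from `Δ` by the functional calculus. The comparison is then
termwise: the weight vanishes at `t = 0`, and for a non-zero eigenvalue `t ≥ 0` it is at most
`λ* t`.
-/

open Matrix

namespace Matrix.IsHermitian

variable {n : Type*} [Fintype n] [DecidableEq n] {A : Matrix n n ℝ}

lemma dotProduct_cfc_mulVec (hA : A.IsHermitian) (f : ℝ → ℝ) (x : n → ℝ) :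
    x ⬝ᵥ cfc f A *ᵥ x =
      ∑ i, f (hA.eigenvalues i) * ((star (hA.eigenvectorUnitary : Matrix n n ℝ) *ᵥ x) i) ^ 2 := by
  have hxU : x ᵥ* (hA.eigenvectorUnitary : Matrix n n ℝ) =
      star (hA.eigenvectorUnitary : Matrix n n ℝ) *ᵥ x := by
    rw [star_eq_conjTranspose, conjTranspose_eq_transpose_of_trivial, mulVec_transpose]
  rw [hA.cfc_eq, IsHermitian.cfc, Unitary.conjStarAlgAut_apply, ← mulVec_mulVec, ← mulVec_mulVec,
    dotProduct_mulVec, hxU]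
  simp [dotProduct, mulVec_diagonal, sq, mul_left_comm]

lemma dotProduct_cfc_mulVec_le (hA : A.IsHermitian) {f g : ℝ → ℝ}
    (hfg : ∀ i, f (hA.eigenvalues i) ≤ g (hA.eigenvalues i)) (x : n → ℝ) :
    x ⬝ᵥ cfc f A *ᵥ x ≤ x ⬝ᵥ cfc g A *ᵥ x := by
  rw [hA.dotProduct_cfc_mulVec, hA.dotProduct_cfc_mulVec]
  gcongr with i
  exact hfg i

end Matrix.IsHermitian

lemma one_sub_mul_mul_one_sub_le_mul {t c : ℝ} (ht : 0 ≤ t) (hc : t ≠ 0 → (t - 1) ^ 2 ≤ c) :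
    (1 - t) * t * (1 - t) ≤ c * t := by
  rcases eq_or_ne t 0 with rfl | ht0
  · simp
  · nlinarith [mul_le_mul_of_nonneg_left (hc ht0) ht]

theorem rayleigh_PDeltaP_le_general {N : ℕ} (Δ : Matrix (Fin N) (Fin N) ℝ)
    (hpsd : Δ.PosSemidef)
    (lam : ℝ)
    (hlam : ∀ i : Fin N, hpsd.1.eigenvalues i ≠ 0 → (hpsd.1.eigenvalues i - 1) ^ 2 ≤ lam)
    (x : Fin N → ℝ) :
    x ⬝ᵥ ((1 - Δ) * Δ * (1 - Δ)).mulVec x ≤ lam * (x ⬝ᵥ Δ.mulVec x) := by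
  have hΔ : IsSelfAdjoint Δ := hpsd.1
  calc x ⬝ᵥ ((1 - Δ) * Δ * (1 - Δ)) *ᵥ x
      = x ⬝ᵥ cfc (fun t : ℝ => (1 - t) * t * (1 - t)) Δ *ᵥ x := by
        rw [cfc_mul .., cfc_mul .., cfc_sub .., cfc_const_one .., cfc_id' ..]
    _ ≤ x ⬝ᵥ cfc (fun t : ℝ => lam * t) Δ *ᵥ x :=
        hpsd.1.dotProduct_cfc_mulVec_le
          (fun i => one_sub_mul_mul_one_sub_le_mul (hpsd.eigenvalues_nonneg i) (hlam i)) x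
    _ = lam * (x ⬝ᵥ Δ *ᵥ x) := by
        rw [cfc_const_mul_id .., smul_mulVec, dotProduct_smul, smul_eq_mul]

/-- Let `Δ` be a real symmetric positive semi-definite `N × N` matrix
with eigenvalues in `[0, 2]`, and `P = I − Δ`.  Then for every vector `x`,
`xᵀ P Δ P x ≤ λ* · xᵀ Δ x`, where `λ*` is the maximum of `(λ − 1)²` over the non-zero
eigenvalues `λ` of `Δ` (encoded as any upper bound `lam` of those values). -/
theorem rayleigh_PDeltaP_le {N : ℕ} (Δ : Matrix (Fin N) (Fin N) ℝ)
    (hpsd : Δ.PosSemidef)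
    (hub : ∀ i : Fin N, hpsd.1.eigenvalues i ≤ 2)
    (lam : ℝ) (hlam0 : 0 ≤ lam)
    (hlam : ∀ i : Fin N, hpsd.1.eigenvalues i ≠ 0 → (hpsd.1.eigenvalues i - 1) ^ 2 ≤ lam)
    (x : Fin N → ℝ) :
    x ⬝ᵥ ((1 - Δ) * Δ * (1 - Δ)).mulVec x ≤ lam * (x ⬝ᵥ Δ.mulVec x) :=
  rayleigh_PDeltaP_le_general Δ hpsd lam hlam x
end

section
/- Let F be a discrete O(d)-bundle over a graph G whose restriction maps satisfy F_{v⊴e} = F_{u⊴e} (depend only on the edge). Then for σ = ReLU applied entrywise, the sheaf Dirichlet energy satisfies E_F(σ(x)) ≤ E_F(x) for every 0-cochain x. -/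
/-!
Orthogonality of the restriction map `F_e`, shared by both endpoints of `e`, turns each edge
term `‖F_e (x_v/√d_v) − F_e (x_u/√d_u)‖²` into `‖x_v/√d_v − x_u/√d_u‖²`. Since ReLU is positively
homogeneous, `σ(x)_v/√d_v = σ(x_v/√d_v)`, and since it is 1-Lipschitz coordinatewise, every such
term can only shrink when `x` is replaced by `σ(x)`.
-/

open Matrix BigOperators

/-- The sheaf Dirichlet energy
`E_F(x) = (1/2) Σ_{e=(v,u)} ‖F_{v⊴e} x_v/√d_v − F_{u⊴e} x_u/√d_u‖²` of a 0-cochain `x`.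
(The double sum over ordered pairs of adjacent vertices counts every edge twice, whence
the factor `1/4`.) -/
noncomputable def sheafDirichletEnergy {V : Type*} [Fintype V] (G : SimpleGraph V)
    [DecidableRel G.Adj] {d : ℕ} (F : V → V → Matrix (Fin d) (Fin d) ℝ)
    (x : V → Fin d → ℝ) : ℝ :=
  (1 / 4 : ℝ) * ∑ v : V, ∑ u ∈ G.neighborFinset v,
    ((F v u).mulVec ((Real.sqrt (G.degree v))⁻¹ • x v) -
      (F u v).mulVec ((Real.sqrt (G.degree u))⁻¹ • x u)) ⬝ᵥ
    ((F v u).mulVec ((Real.sqrt (G.degree v))⁻¹ • x v) -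
      (F u v).mulVec ((Real.sqrt (G.degree u))⁻¹ • x u))

theorem Matrix.dotProduct_self_mulVec_of_mem_orthogonalGroup {n R : Type*} [Fintype n]
    [DecidableEq n] [CommRing R] {M : Matrix n n R} (hM : M ∈ orthogonalGroup n R)
    (w : n → R) : M *ᵥ w ⬝ᵥ M *ᵥ w = w ⬝ᵥ w := by
  rw [dotProduct_mulVec, vecMul_mulVec, (mem_orthogonalGroup_iff' n R).mp hM, vecMul_one]

theorem smul_relu_sub_smul_relu_dotProduct_self_le {n : Type*} [Fintype n] {a b : ℝ}
    (ha : 0 ≤ a) (hb : 0 ≤ b) (x y : n → ℝ) :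
    (a • (fun i => max (x i) 0) - b • fun i => max (y i) 0) ⬝ᵥ
        (a • (fun i => max (x i) 0) - b • fun i => max (y i) 0) ≤
      (a • x - b • y) ⬝ᵥ (a • x - b • y) := by
  refine Finset.sum_le_sum fun i _ => ?_
  simp only [Pi.sub_apply, Pi.smul_apply, smul_eq_mul, ← sq]
  rw [mul_max_of_nonneg _ _ ha, mul_max_of_nonneg _ _ hb, mul_zero, mul_zero]
  exact sq_le_sq.mpr (abs_max_sub_max_le_abs _ _ _)

/-- Let `F` be a discrete `O(d)`-bundle over a graph `G` whose
restriction maps depend only on the edge (`F_{v⊴e} = F_{u⊴e}`).  Then applying ReLU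
entrywise does not increase the sheaf Dirichlet energy: `E_F(σ(x)) ≤ E_F(x)`. -/
theorem relu_energy_decrease {V : Type*} [Fintype V] (G : SimpleGraph V)
    [DecidableRel G.Adj] {d : ℕ} (F : V → V → Matrix (Fin d) (Fin d) ℝ)
    (horth : ∀ v u : V, G.Adj v u → F v u ∈ Matrix.orthogonalGroup (Fin d) ℝ)
    (hsym : ∀ v u : V, G.Adj v u → F v u = F u v)
    (x : V → Fin d → ℝ) :
    sheafDirichletEnergy G F (fun v i => max (x v i) 0) ≤ sheafDirichletEnergy G F x := by
  unfold sheafDirichletEnergy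
  gcongr with v _ u hu
  have hadj : G.Adj v u := (G.mem_neighborFinset v u).mp hu
  rw [← hsym v u hadj, ← mulVec_sub, ← mulVec_sub,
    dotProduct_self_mulVec_of_mem_orthogonalGroup (horth v u hadj),
    dotProduct_self_mulVec_of_mem_orthogonalGroup (horth v u hadj)]
  exact smul_relu_sub_smul_relu_dotProduct_self_le (by positivity) (by positivity) _ _
end

section
/- Let F be a discrete O(d)-bundle over a connected graph with F_{v⊴e} = F_{u⊴e} for every edge (symmetric orthogonal restriction maps). Then a 0-cochain x lies in the kernel of the normalised sheaf Laplacian Δ_F if and only if each of the d coordinate signals x^k (the vector in R^n of k-th stalk coordinates across nodes) lies in the kernel of the classical normalised graph Laplacian Δ_0. -/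
open Matrix BigOperators
/-- The classical normalised graph Laplacian `Δ₀ = D^{-1/2}(D − A)D^{-1/2}`. -/
noncomputable def normGraphLaplacian {V : Type*} [Fintype V] [DecidableEq V]
    (G : SimpleGraph V) [DecidableRel G.Adj] : Matrix V V ℝ :=
  fun v u =>
    (if v = u then (G.degree v : ℝ) else if G.Adj v u then -1 else 0)
    / (Real.sqrt (G.degree v) * Real.sqrt (G.degree u))

/-! Orthogonality and symmetry make every `d × d` block of `Δ_F` a scalar multiple of the
identity: the diagonal block `∑_w F_{vw}ᵀ F_{vw}` is `deg v • 1` and the off-diagonal block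
`F_{vu}ᵀ F_{uv} = F_{vu}ᵀ F_{vu}` is `1`. Hence `Δ_F = Δ₀ ⊗ₖ 1`, which acts on each coordinate
signal separately. -/

open scoped Kronecker

namespace Matrix

variable {R m n p : Type*} [CommSemiring R] [Fintype n] [Fintype p] [DecidableEq p]

theorem kronecker_one_mulVec_apply (A : Matrix m n R) (x : n × p → R) (i : m) (k : p) :
    ((A ⊗ₖ (1 : Matrix p p R)) *ᵥ x) (i, k) = (A *ᵥ fun j => x (j, k)) i := by
  simp [mulVec, dotProduct, Fintype.sum_prod_type, one_apply]

theorem kronecker_one_mulVec_eq_zero_iff (A : Matrix m n R) (x : n × p → R) :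
    (A ⊗ₖ (1 : Matrix p p R)) *ᵥ x = 0 ↔ ∀ k, A *ᵥ (fun j => x (j, k)) = 0 := by
  simp only [funext_iff, Prod.forall, kronecker_one_mulVec_apply, Pi.zero_apply]
  exact forall_comm

end Matrix

section

variable {V : Type*} [Fintype V] (G : SimpleGraph V) [DecidableRel G.Adj] {d : ℕ}
  {F : V → V → Matrix (Fin d) (Fin d) ℝ}

theorem sum_neighborFinset_transpose_mul_self
    (horth : ∀ v u : V, G.Adj v u → F v u ∈ Matrix.orthogonalGroup (Fin d) ℝ) (v : V) :
    ∑ w ∈ G.neighborFinset v, (F v w)ᵀ * F v w = (G.degree v : ℝ) • 1 := by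
  rw [Finset.sum_congr rfl fun w hw =>
    (Matrix.mem_orthogonalGroup_iff' _ _).mp (horth v w ((G.mem_neighborFinset v w).mp hw)),
    Finset.sum_const, SimpleGraph.card_neighborFinset_eq_degree, Nat.cast_smul_eq_nsmul]

theorem normSheafLaplacian_eq_kronecker [DecidableEq V]
    (horth : ∀ v u : V, G.Adj v u → F v u ∈ Matrix.orthogonalGroup (Fin d) ℝ)
    (hsym : ∀ v u : V, G.Adj v u → F v u = F u v) :
    normSheafLaplacian G F = normGraphLaplacian G ⊗ₖ 1 := by
  ext ⟨v, i⟩ ⟨u, j⟩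
  simp only [normSheafLaplacian, normGraphLaplacian, Matrix.kroneckerMap_apply]
  by_cases hvu : v = u
  · subst hvu
    rw [sum_neighborFinset_transpose_mul_self G horth]
    by_cases hij : i = j <;> simp [Matrix.one_apply, hij]
  by_cases hadj : G.Adj v u
  · rw [← hsym v u hadj, (Matrix.mem_orthogonalGroup_iff' _ _).mp (horth v u hadj)]
    by_cases hij : i = j <;> simp [Matrix.one_apply, hij, hvu, hadj]
  · simp [hvu, hadj]

end

theorem symmetric_bundle_kernel_iff_graph_kernel_general {V : Type*} [Fintype V] [DecidableEq V]
    (G : SimpleGraph V) [DecidableRel G.Adj] {d : ℕ}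
    (F : V → V → Matrix (Fin d) (Fin d) ℝ)
    (horth : ∀ v u : V, G.Adj v u → F v u ∈ Matrix.orthogonalGroup (Fin d) ℝ)
    (hsym : ∀ v u : V, G.Adj v u → F v u = F u v)
    (x : V × Fin d → ℝ) :
    (normSheafLaplacian G F).mulVec x = 0 ↔
      ∀ k : Fin d, (normGraphLaplacian G).mulVec (fun v => x (v, k)) = 0 := by
  rw [normSheafLaplacian_eq_kronecker G horth hsym, Matrix.kronecker_one_mulVec_eq_zero_iff]

/-- Let `F` be a discrete `O(d)`-bundle over a connected graph with
`F_{v⊴e} = F_{u⊴e}` on every edge.  Then a 0-cochain `x` lies in the kernel of the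
normalised sheaf Laplacian `Δ_F` if and only if each coordinate signal
`x^k = (x (v,k))_v` lies in the kernel of the classical normalised graph Laplacian. -/
theorem symmetric_bundle_kernel_iff_graph_kernel {V : Type*} [Fintype V] [DecidableEq V]
    (G : SimpleGraph V) [DecidableRel G.Adj] (hconn : G.Connected) {d : ℕ}
    (F : V → V → Matrix (Fin d) (Fin d) ℝ)
    (horth : ∀ v u : V, G.Adj v u → F v u ∈ Matrix.orthogonalGroup (Fin d) ℝ)
    (hsym : ∀ v u : V, G.Adj v u → F v u = F u v)
    (x : V × Fin d → ℝ) :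
    (normSheafLaplacian G F).mulVec x = 0 ↔
      ∀ k : Fin d, (normGraphLaplacian G).mulVec (fun v => x (v, k)) = 0 :=
  symmetric_bundle_kernel_iff_graph_kernel_general G F horth hsym x
end

section
/- For any connected graph G with at least one edge, any stalk dimension d ≥ 2, and any ε > 0, there exist a cellular sheaf F on G whose restriction maps are not all symmetric across edges, a matrix W₁ ∈ R^{d×d} with spectral norm ‖W₁‖₂ < ε, and a 0-cochain x with E_F(x) = 0 but E_F((I ⊗ W₁)x) > 0; that is, an arbitrarily small linear transformation can increase the sheaf Dirichlet energy out of the harmonic space. -/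
open Matrix BigOperators

/-!
On a single edge `ab` twist the trivial `O(d)`-bundle by a reflection `R` across the
hyperplane `e_j^⊥`, i.e. set `F_{a⊴ab} = R`. A cochain `x_v = √d_v · g` then has zero
energy exactly when `R g = g`. Take `g = e_i` with `i ≠ j`, which `R` fixes, and let
`W₁ = (ε/2) e_j e_iᵀ`, of spectral norm `ε/2`: it sends `g` to `(ε/2) e_j`, which `R` negates,
so `(I ⊗ W₁) x` has positive energy.
-/

section Reflection

variable {n : Type*} [DecidableEq n]

def coordReflection (j : n) : Matrix n n ℝ :=
  diagonal (Function.update (1 : n → ℝ) j (-1))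

variable [Fintype n]

theorem coordReflection_mem_orthogonalGroup (j : n) :
    coordReflection j ∈ orthogonalGroup n ℝ := by
  have hsq : ∀ i, Function.update (1 : n → ℝ) j (-1) i * Function.update (1 : n → ℝ) j (-1) i
      = 1 := by
    intro i
    rcases eq_or_ne i j with rfl | h <;> simp [*]
  rw [mem_orthogonalGroup_iff, coordReflection, diagonal_transpose, diagonal_mul_diagonal]
  simp [hsq]

theorem coordReflection_mulVec_single_of_ne {i j : n} (hij : i ≠ j) (c : ℝ) :
    coordReflection j *ᵥ Pi.single i c = Pi.single i c := by
  rw [coordReflection, diagonal_mulVec_single]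
  simp [hij]

theorem coordReflection_mulVec_single_self (j : n) (c : ℝ) :
    coordReflection j *ᵥ Pi.single j c = Pi.single j (-c) := by
  rw [coordReflection, diagonal_mulVec_single]
  simp

omit [Fintype n] in
theorem coordReflection_ne_one (j : n) : coordReflection j ≠ 1 := fun h => by
  have := congr_fun (congr_fun h j) j
  norm_num [coordReflection] at this

end Reflection

theorem single_mulVec_dotProduct_self_le {m n : Type*} [Fintype m] [Fintype n] [DecidableEq m]
    [DecidableEq n] (i : m) (j : n) (c : ℝ) (y : n → ℝ) :
    (single i j c *ᵥ y) ⬝ᵥ (single i j c *ᵥ y) ≤ c ^ 2 * (y ⬝ᵥ y) := by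
  have hy : y j * y j ≤ y ⬝ᵥ y :=
    Finset.single_le_sum (f := fun k => y k * y k) (fun k _ => mul_self_nonneg (y k))
      (Finset.mem_univ j)
  calc (single i j c *ᵥ y) ⬝ᵥ (single i j c *ᵥ y) = c ^ 2 * (y j * y j) := by
        rw [single_mulVec, ← Pi.single, single_dotProduct, Pi.single_eq_same]; ring
    _ ≤ c ^ 2 * (y ⬝ᵥ y) := by gcongr

section EdgeTwist

variable {V n : Type*} [DecidableEq V] [DecidableEq n]

def edgeTwist (a b : V) (R : Matrix n n ℝ) : V → V → Matrix n n ℝ :=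
  fun v u => if v = a ∧ u = b then R else 1

theorem edgeTwist_mem_orthogonalGroup [Fintype n] {R : Matrix n n ℝ}
    (hR : R ∈ orthogonalGroup n ℝ) (a b v u : V) : edgeTwist a b R v u ∈ orthogonalGroup n ℝ := by
  unfold edgeTwist
  split_ifs
  exacts [hR, one_mem _]

theorem edgeTwist_ne_swap {a b : V} (hab : a ≠ b) {R : Matrix n n ℝ} (hR : R ≠ 1) :
    edgeTwist a b R a b ≠ edgeTwist a b R b a := by
  simpa [edgeTwist, hab.symm] using hR

theorem edgeTwist_compatible_iff [Fintype n] {G : SimpleGraph V} {a b : V} (hab : G.Adj a b)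
    (R : Matrix n n ℝ) (g : n → ℝ) :
    (∀ v u, G.Adj v u → edgeTwist a b R v u *ᵥ g = edgeTwist a b R u v *ᵥ g) ↔ R *ᵥ g = g := by
  constructor
  · intro h
    simpa [edgeTwist, hab.ne.symm] using h a b hab
  · intro h v u _
    simp only [edgeTwist]
    split_ifs <;> simp [h]

end EdgeTwist

section Energy

variable {V : Type*} [Fintype V] (G : SimpleGraph V) [DecidableRel G.Adj] {d : ℕ}
  (F : V → V → Matrix (Fin d) (Fin d) ℝ)

theorem sheafDirichletEnergy_nonneg (x : V → Fin d → ℝ) : 0 ≤ sheafDirichletEnergy G F x :=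
  mul_nonneg (by norm_num) <| Finset.sum_nonneg fun _ _ => Finset.sum_nonneg fun _ _ =>
    dotProduct_self_star_nonneg _

theorem sheafDirichletEnergy_eq_zero_iff (x : V → Fin d → ℝ) :
    sheafDirichletEnergy G F x = 0 ↔ ∀ v u, G.Adj v u →
      F v u *ᵥ ((√(G.degree v))⁻¹ • x v) = F u v *ᵥ ((√(G.degree u))⁻¹ • x u) := by
  have hsq (w : Fin d → ℝ) : 0 ≤ w ⬝ᵥ w := dotProduct_self_star_nonneg w
  rw [sheafDirichletEnergy, mul_eq_zero, or_iff_right (by norm_num),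
    Finset.sum_eq_zero_iff_of_nonneg fun _ _ => Finset.sum_nonneg fun _ _ => hsq _]
  simp only [Finset.mem_univ, true_implies, Finset.sum_eq_zero_iff_of_nonneg fun _ _ => hsq _,
    SimpleGraph.mem_neighborFinset, dotProduct_self_eq_zero, sub_eq_zero]

theorem sheafDirichletEnergy_degree_smul_eq_zero_iff (g : Fin d → ℝ) :
    sheafDirichletEnergy G F (fun v => √(G.degree v) • g) = 0 ↔
      ∀ v u, G.Adj v u → F v u *ᵥ g = F u v *ᵥ g := by
  have hnormalize : ∀ v u, G.Adj v u → (√(G.degree v))⁻¹ • √(G.degree v) • g = g := by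
    intro v u hvu
    have hdeg : 0 < G.degree v := G.degree_pos_iff_exists_adj v |>.mpr ⟨u, hvu⟩
    rw [smul_smul, inv_mul_cancel₀ (by positivity), one_smul]
  rw [sheafDirichletEnergy_eq_zero_iff]
  refine forall₂_congr fun v u => forall_congr' fun hvu => ?_
  rw [hnormalize v u hvu, hnormalize u v hvu.symm]

end Energy

theorem small_weight_energy_increase_general {V : Type*} [Fintype V]
    (G : SimpleGraph V) [DecidableRel G.Adj]
    (hedge : ∃ v u : V, G.Adj v u) {d : ℕ} (hd : 2 ≤ d) (ε : ℝ) (hε : 0 < ε) :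
    ∃ (F : V → V → Matrix (Fin d) (Fin d) ℝ) (W₁ : Matrix (Fin d) (Fin d) ℝ)
      (x : V → Fin d → ℝ),
      (∀ v u : V, G.Adj v u → F v u ∈ Matrix.orthogonalGroup (Fin d) ℝ) ∧
      (∃ v u : V, G.Adj v u ∧ F v u ≠ F u v) ∧
      (∃ c : ℝ, 0 ≤ c ∧ c < ε ∧ ∀ y : Fin d → ℝ,
        (W₁.mulVec y) ⬝ᵥ (W₁.mulVec y) ≤ c ^ 2 * (y ⬝ᵥ y)) ∧
      sheafDirichletEnergy G F x = 0 ∧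
      0 < sheafDirichletEnergy G F (fun v => W₁.mulVec (x v)) := by
  classical
  obtain ⟨a, b, hab⟩ := hedge
  let i : Fin d := ⟨0, by omega⟩
  let j : Fin d := ⟨1, by omega⟩
  have hij : i ≠ j := by simp [i, j, Fin.ext_iff]
  let F := edgeTwist a b (coordReflection j)
  let W := single j i (ε / 2)
  have hW : ∀ v, W *ᵥ (√(G.degree v) • Pi.single i 1) = √(G.degree v) • Pi.single j (ε / 2) := by
    intro v
    rw [mulVec_smul, single_mulVec, ← Pi.single, Pi.single_eq_same, mul_one]
  refine ⟨F, W, fun v => √(G.degree v) • Pi.single i 1,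
    fun v u _ => edgeTwist_mem_orthogonalGroup (coordReflection_mem_orthogonalGroup j) a b v u,
    ⟨a, b, hab, edgeTwist_ne_swap hab.ne (coordReflection_ne_one j)⟩,
    ⟨ε / 2, by positivity, by linarith, single_mulVec_dotProduct_self_le j i _⟩, ?_, ?_⟩
  · rw [sheafDirichletEnergy_degree_smul_eq_zero_iff, edgeTwist_compatible_iff hab]
    exact coordReflection_mulVec_single_of_ne hij 1
  · simp_rw [hW]
    refine (sheafDirichletEnergy_nonneg G F _).lt_of_ne' ?_
    rw [Ne, sheafDirichletEnergy_degree_smul_eq_zero_iff, edgeTwist_compatible_iff hab,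
      coordReflection_mulVec_single_self, (Pi.single_injective j).eq_iff]
    exact fun h => by linarith

/-- For any connected graph `G` with at least one edge, any stalk
dimension `d ≥ 2`, and any `ε > 0`, there exist a cellular sheaf `F` on `G` (here a
discrete `O(d)`-bundle, so that its Laplacian block-diagonal is `d_v • I`) whose
restriction maps are not all symmetric across edges, a matrix `W₁` of spectral norm `< ε`,
and a 0-cochain `x` with `E_F(x) = 0` but `E_F((I ⊗ W₁) x) > 0`: an arbitrarily small
linear map can push a harmonic signal out of the harmonic space. -/
theorem small_weight_energy_increase {V : Type*} [Fintype V]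
    (G : SimpleGraph V) [DecidableRel G.Adj] (hconn : G.Connected)
    (hedge : ∃ v u : V, G.Adj v u) {d : ℕ} (hd : 2 ≤ d) (ε : ℝ) (hε : 0 < ε) :
    ∃ (F : V → V → Matrix (Fin d) (Fin d) ℝ) (W₁ : Matrix (Fin d) (Fin d) ℝ)
      (x : V → Fin d → ℝ),
      (∀ v u : V, G.Adj v u → F v u ∈ Matrix.orthogonalGroup (Fin d) ℝ) ∧
      (∃ v u : V, G.Adj v u ∧ F v u ≠ F u v) ∧
      (∃ c : ℝ, 0 ≤ c ∧ c < ε ∧ ∀ y : Fin d → ℝ,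
        (W₁.mulVec y) ⬝ᵥ (W₁.mulVec y) ≤ c ^ 2 * (y ⬝ᵥ y)) ∧
      sheafDirichletEnergy G F x = 0 ∧
      0 < sheafDirichletEnergy G F (fun v => W₁.mulVec (x v)) :=
  small_weight_energy_increase_general G hedge hd ε hε
end
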